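/- arXiv:0906.1761 — 5 statements merged into one kernel-verified Lean document; each statement's English description precedes it below -/
import Mathlib

section
/- Let e_1,…,e_p be unit vectors in ℂᵐ and f_1,…,f_p be unit vectors in ℂⁿ, with f_1,…,f_p linearly independent. If e ∈ ℂᵐ and f ∈ ℂⁿ are unit vectors such that the product vector e⊗f lies in the linear span of {e_i⊗f_i : 1 ≤ i ≤ p}, then there is an index j such that ℂe = ℂe_j and such that f lies in the linear span of {f_i : ℂe_i = ℂe_j}. -/
open scoped Kronecker ComplexOrder

noncomputable section

/-
Write `x ⊗ y = ∑ cᵢ • eᵢ ⊗ fᵢ`. Reading off the `a`-th row gives `x a • y = ∑ (cᵢ eᵢ a) • fᵢ`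
for every `a`; a row with `x a ≠ 0` expresses `y = ∑ dᵢ • fᵢ`, and then linear independence of
the `fᵢ` compares coefficients row by row: `cᵢ • eᵢ = dᵢ • x`. Hence `ℂeᵢ = ℂx` whenever
`dᵢ ≠ 0`, and `y ≠ 0` forces some `dⱼ ≠ 0`.
-/

/-- The (Kronecker) tensor product of two vectors. -/
def tensorVec {m n : ℕ} (x : EuclideanSpace ℂ (Fin m)) (y : EuclideanSpace ℂ (Fin n)) :
    EuclideanSpace ℂ (Fin m × Fin n) :=
  WithLp.toLp 2 (fun p : Fin m × Fin n => x p.1 * y p.2)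

theorem Submodule.span_singleton_eq_of_smul_eq {K V : Type*} [Field K] [AddCommGroup V]
    [Module K V] {u x : V} {c d : K} (hx : x ≠ 0) (hd : d ≠ 0) (h : c • u = d • x) :
    K ∙ u = K ∙ x := by
  have hc : c ≠ 0 := by
    rintro rfl
    exact smul_ne_zero hd hx (by rw [← h, zero_smul])
  rw [← span_singleton_smul_eq hc.isUnit u, h, span_singleton_smul_eq hd.isUnit x]

theorem exists_coeffs_of_forall_sum_smul_eq {K V ι κ : Type*} [Field K] [AddCommGroup V]
    [Module K V] [Fintype ι] {v : ι → V} (hv : LinearIndependent K v) {c : ι → K}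
    {u : ι → κ → K} {x : κ → K} {y : V} (hx : x ≠ 0)
    (h : ∀ a, ∑ i, (c i * u i a) • v i = x a • y) :
    ∃ d : ι → K, y = ∑ i, d i • v i ∧ ∀ i, c i • u i = d i • x := by
  obtain ⟨a₀, ha₀⟩ := Function.ne_iff.mp hx
  set d : ι → K := fun i => (x a₀)⁻¹ * (c i * u i a₀)
  have hy : y = ∑ i, d i • v i :=
    calc y = (x a₀)⁻¹ • x a₀ • y := by rw [smul_smul, inv_mul_cancel₀ ha₀, one_smul]
      _ = ∑ i, d i • v i := by simp only [← h a₀, Finset.smul_sum, smul_smul, d]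
  refine ⟨d, hy, fun i => funext fun a => ?_⟩
  have hrow : ∑ i, (c i * u i a) • v i = ∑ i, (x a * d i) • v i := by
    rw [h a, hy, Finset.smul_sum]
    simp only [smul_smul]
  simpa [mul_comm] using hv.eq_coords_of_eq hrow i

theorem sum_smul_tensorVec_row {m n p : ℕ} {c : Fin p → ℂ}
    {e : Fin p → EuclideanSpace ℂ (Fin m)} {f : Fin p → EuclideanSpace ℂ (Fin n)}
    {x : EuclideanSpace ℂ (Fin m)} {y : EuclideanSpace ℂ (Fin n)}
    (h : ∑ i, c i • tensorVec (e i) (f i) = tensorVec x y) (a : Fin m) :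
    ∑ i, (c i * e i a) • f i = x a • y := by
  ext b
  have hab := congrArg (fun z : EuclideanSpace ℂ (Fin m × Fin n) => z (a, b)) h
  simpa [tensorVec, WithLp.ofLp_sum, Finset.sum_apply, mul_assoc] using hab

theorem product_vector_in_span_general {m n p : ℕ}
    (e : Fin p → EuclideanSpace ℂ (Fin m)) (f : Fin p → EuclideanSpace ℂ (Fin n))
    (hf : LinearIndependent ℂ f)
    (x : EuclideanSpace ℂ (Fin m)) (y : EuclideanSpace ℂ (Fin n))
    (hx : ‖x‖ = 1) (hy : ‖y‖ = 1)
    (hmem : tensorVec x y ∈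
      Submodule.span ℂ (Set.range fun i => tensorVec (e i) (f i))) :
    ∃ j : Fin p, Submodule.span ℂ {x} = Submodule.span ℂ {e j} ∧
      y ∈ Submodule.span ℂ
        (f '' {i | Submodule.span ℂ {e i} = Submodule.span ℂ {e j}}) := by
  have hx0 : x ≠ 0 := norm_ne_zero_iff.mp (by simp [hx])
  have hy0 : y ≠ 0 := norm_ne_zero_iff.mp (by simp [hy])
  obtain ⟨c, hc⟩ := (Submodule.mem_span_range_iff_exists_fun ℂ).mp hmem
  obtain ⟨d, hyd, hcd⟩ := exists_coeffs_of_forall_sum_smul_eq hf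
    (fun h => hx0 (WithLp.ofLp_injective 2 h)) (sum_smul_tensorVec_row hc)
  have hspan : ∀ i, d i ≠ 0 → Submodule.span ℂ {e i} = Submodule.span ℂ {x} := fun i hi =>
    Submodule.span_singleton_eq_of_smul_eq hx0 hi (WithLp.ofLp_injective 2 (by simpa using hcd i))
  obtain ⟨j, hj⟩ : ∃ j, d j ≠ 0 := by
    by_contra! h
    exact hy0 (by simp [hyd, h])
  refine ⟨j, (hspan j hj).symm, hyd ▸ Submodule.sum_mem _ fun i _ => ?_⟩
  by_cases hi : d i = 0
  · simp [hi]
  · exact Submodule.smul_mem _ _ (Submodule.subset_span ⟨i, by simp [hspan i hi, hspan j hj], rfl⟩)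

/-- If `e⊗f` lies in the span of `{eᵢ⊗fᵢ}` with the `fᵢ` linearly independent, then
`ℂe = ℂeⱼ` for some `j`, and `f` lies in the span of those `fᵢ` with `ℂeᵢ = ℂeⱼ`. -/
theorem product_vector_in_span {m n p : ℕ}
    (e : Fin p → EuclideanSpace ℂ (Fin m)) (f : Fin p → EuclideanSpace ℂ (Fin n))
    (he : ∀ i, ‖e i‖ = 1) (hf1 : ∀ i, ‖f i‖ = 1) (hf : LinearIndependent ℂ f)
    (x : EuclideanSpace ℂ (Fin m)) (y : EuclideanSpace ℂ (Fin n))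
    (hx : ‖x‖ = 1) (hy : ‖y‖ = 1)
    (hmem : tensorVec x y ∈
      Submodule.span ℂ (Set.range fun i => tensorVec (e i) (f i))) :
    ∃ j : Fin p, Submodule.span ℂ {x} = Submodule.span ℂ {e j} ∧
      y ∈ Submodule.span ℂ
        (f '' {i | Submodule.span ℂ {e i} = Submodule.span ℂ {e j}}) :=
  product_vector_in_span_general e f hf x y hx hy hmem

end
end

section
/- Let e_1,…,e_p be unit vectors in ℂᵐ and f_1,…,f_p be unit vectors in ℂⁿ, with f_1,…,f_p linearly independent and the lines ℂe_1,…,ℂe_p pairwise distinct. Then: (a) if e ∈ ℂᵐ and f ∈ ℂⁿ are unit vectors with e⊗f in the linear span of {e_i⊗f_i : 1 ≤ i ≤ p}, there is an index j with ℂe = ℂe_j and ℂf = ℂf_j; and (b) the vectors e_1⊗f_1,…,e_p⊗f_p are linearly independent. -/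
open scoped Kronecker ComplexOrder

noncomputable section

/-!
Reading off row `a` of `x ⊗ y = ∑ cᵢ eᵢ ⊗ fᵢ` gives `x(a) y = ∑ cᵢ eᵢ(a) fᵢ`. Choosing `a` with
`x(a) ≠ 0` writes `y = ∑ dᵢ fᵢ`, and then linear independence of the `fᵢ`, applied row by row,
yields `cᵢ eᵢ = dᵢ x` for every `i`. So `ℂx = ℂeᵢ` whenever `dᵢ ≠ 0`; as the lines `ℂeᵢ` are
distinct, only one `dⱼ` is nonzero and `y = dⱼ fⱼ`. Part (b) is the same identity for
`x = y = 0`: it gives `cᵢ eᵢ = 0`, hence `cᵢ = 0`.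
-/

theorem Submodule.span_singleton_eq_of_smul_eq_smul {K V : Type*} [Field K] [AddCommGroup V]
    [Module K V] {c d : K} {u v : V} (hu : u ≠ 0) (hd : d ≠ 0) (h : c • v = d • u) :
    Submodule.span K {u} = Submodule.span K {v} := by
  have hc : c ≠ 0 := by
    rintro rfl
    exact smul_ne_zero hd hu (by rw [← h, zero_smul])
  have hu_eq : u = (d⁻¹ * c) • v := by rw [mul_smul, h, inv_smul_smul₀ hd]
  rw [hu_eq, Submodule.span_singleton_smul_eq (IsUnit.mk0 _ (mul_ne_zero (inv_ne_zero hd) hc))]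

namespace tensorVec

variable {m n p : ℕ}

def row (a : Fin m) : EuclideanSpace ℂ (Fin m × Fin n) →ₗ[ℂ] EuclideanSpace ℂ (Fin n) where
  toFun v := WithLp.toLp 2 fun b => v (a, b)
  map_add' _ _ := rfl
  map_smul' _ _ := rfl

theorem row_tensorVec (a : Fin m) (x : EuclideanSpace ℂ (Fin m)) (y : EuclideanSpace ℂ (Fin n)) :
    row a (tensorVec x y) = x a • y :=
  rfl

theorem zero_left (y : EuclideanSpace ℂ (Fin n)) :
    tensorVec (0 : EuclideanSpace ℂ (Fin m)) y = 0 := by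
  ext; simp [tensorVec]

variable {e : Fin p → EuclideanSpace ℂ (Fin m)} {f : Fin p → EuclideanSpace ℂ (Fin n)}
  {x : EuclideanSpace ℂ (Fin m)} {y : EuclideanSpace ℂ (Fin n)} {c : Fin p → ℂ}

theorem row_sum (a : Fin m) :
    row a (∑ i, c i • tensorVec (e i) (f i)) = ∑ i, (c i * e i a) • f i := by
  simp only [map_sum, map_smul, row_tensorVec, mul_smul]

theorem exists_right_eq_sum_of_eq_sum (hx : x ≠ 0)
    (h : tensorVec x y = ∑ i, c i • tensorVec (e i) (f i)) :
    ∃ d : Fin p → ℂ, y = ∑ i, d i • f i := by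
  obtain ⟨a, ha⟩ : ∃ a, x a ≠ 0 := by
    by_contra! h0
    exact hx (PiLp.ext h0)
  refine ⟨fun i => (x a)⁻¹ * (c i * e i a), ?_⟩
  have hrow := congrArg (row a) h
  rw [row_tensorVec, row_sum] at hrow
  simp only [mul_smul] at hrow ⊢
  rw [← Finset.smul_sum, ← hrow, inv_smul_smul₀ ha]

theorem smul_eq_smul_of_eq_sum (hf : LinearIndependent ℂ f)
    (h : tensorVec x y = ∑ i, c i • tensorVec (e i) (f i)) {d : Fin p → ℂ}
    (hy : y = ∑ i, d i • f i) (i : Fin p) : c i • e i = d i • x := by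
  ext a
  have hrow := congrArg (row a) h
  rw [row_tensorVec, row_sum, hy, Finset.smul_sum] at hrow
  simp only [← mul_smul] at hrow
  have := Fintype.linearIndependent_iffₛ.mp hf _ _ hrow i
  simp only [PiLp.smul_apply, smul_eq_mul]
  linear_combination -this

end tensorVec

theorem product_vector_in_span_distinct_lines_general {m n p : ℕ}
    (e : Fin p → EuclideanSpace ℂ (Fin m)) (f : Fin p → EuclideanSpace ℂ (Fin n))
    (he : ∀ i, ‖e i‖ = 1) (hf : LinearIndependent ℂ f)
    (hdist : ∀ i j : Fin p, i ≠ j →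
      Submodule.span ℂ {e i} ≠ Submodule.span ℂ {e j}) :
    (∀ (x : EuclideanSpace ℂ (Fin m)) (y : EuclideanSpace ℂ (Fin n)),
      ‖x‖ = 1 → ‖y‖ = 1 →
      tensorVec x y ∈ Submodule.span ℂ (Set.range fun i => tensorVec (e i) (f i)) →
      ∃ j : Fin p, Submodule.span ℂ {x} = Submodule.span ℂ {e j} ∧
        Submodule.span ℂ {y} = Submodule.span ℂ {f j}) ∧
    LinearIndependent ℂ (fun i => tensorVec (e i) (f i)) := by
  refine ⟨fun x y hx hy hmem => ?_, ?_⟩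
  · have hx0 : x ≠ 0 := norm_ne_zero_iff.mp (by simp [hx])
    have hy0 : y ≠ 0 := norm_ne_zero_iff.mp (by simp [hy])
    obtain ⟨c, hc⟩ := (Submodule.mem_span_range_iff_exists_fun ℂ).mp hmem
    obtain ⟨d, hyd⟩ := tensorVec.exists_right_eq_sum_of_eq_sum hx0 hc.symm
    have hline : ∀ i, d i ≠ 0 → Submodule.span ℂ {x} = Submodule.span ℂ {e i} := fun i hdi =>
      Submodule.span_singleton_eq_of_smul_eq_smul hx0 hdi
        (tensorVec.smul_eq_smul_of_eq_sum hf hc.symm hyd i)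
    obtain ⟨j, hj⟩ : ∃ j, d j ≠ 0 := by
      by_contra! h0
      exact hy0 (by simp [hyd, h0])
    have hd_eq : ∀ i, i ≠ j → d i = 0 := fun i hij => by
      by_contra hdi
      exact hdist i j hij ((hline i hdi).symm.trans (hline j hj))
    have hy_eq : y = d j • f j := by
      rw [hyd, Finset.sum_eq_single j (fun i _ hij => by simp [hd_eq i hij]) (by simp)]
    exact ⟨j, hline j hj, by rw [hy_eq, Submodule.span_singleton_smul_eq (IsUnit.mk0 _ hj)]⟩
  · refine Fintype.linearIndependent_iff.mpr fun c hc i => ?_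
    have hci := tensorVec.smul_eq_smul_of_eq_sum (x := 0) (y := 0) (d := 0) hf
      (by rw [hc, tensorVec.zero_left]) (by simp) i
    have he0 : e i ≠ 0 := norm_ne_zero_iff.mp (by simp [he i])
    simpa [he0] using hci

/-- If the `fᵢ` are linearly independent and the lines `ℂeᵢ` are pairwise distinct, then
(a) any product unit vector `e⊗f` in the span of the `eᵢ⊗fᵢ` has `ℂe = ℂeⱼ`, `ℂf = ℂfⱼ`
for some `j`, and (b) the vectors `eᵢ⊗fᵢ` are linearly independent. -/
theorem product_vector_in_span_distinct_lines {m n p : ℕ}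
    (e : Fin p → EuclideanSpace ℂ (Fin m)) (f : Fin p → EuclideanSpace ℂ (Fin n))
    (he : ∀ i, ‖e i‖ = 1) (hf1 : ∀ i, ‖f i‖ = 1) (hf : LinearIndependent ℂ f)
    (hdist : ∀ i j : Fin p, i ≠ j →
      Submodule.span ℂ {e i} ≠ Submodule.span ℂ {e j}) :
    (∀ (x : EuclideanSpace ℂ (Fin m)) (y : EuclideanSpace ℂ (Fin n)),
      ‖x‖ = 1 → ‖y‖ = 1 →
      tensorVec x y ∈ Submodule.span ℂ (Set.range fun i => tensorVec (e i) (f i)) →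
      ∃ j : Fin p, Submodule.span ℂ {x} = Submodule.span ℂ {e j} ∧
        Submodule.span ℂ {y} = Submodule.span ℂ {f j}) ∧
    LinearIndependent ℂ (fun i => tensorVec (e i) (f i)) :=
  product_vector_in_span_distinct_lines_general e f he hf hdist

end
end

section
/- Let L be a subspace of ℂⁿ which is the internal direct sum of subspaces L_1,…,L_p, and for each i let F_i be the face of the state space K_n of B(ℂⁿ) corresponding to L_i, i.e. F_i = {ρ ∈ K_n : tr(ρ P_i) = 1} where P_i is the orthogonal projection onto L_i. Then the convex hull of F_1 ∪ … ∪ F_p is the direct convex sum of F_1,…,F_p. -/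
open scoped Kronecker ComplexOrder

noncomputable section

/-- The state space of `B(ℂ^ι)`: density matrices. -/
def stateSet (ι : Type*) [Fintype ι] [DecidableEq ι] : Set (Matrix ι ι ℂ) :=
  {ρ | ρ.PosSemidef ∧ ρ.trace = 1}

/-- `C` is the direct convex sum of the convex sets `F 1, …, F q`. -/
def IsDirectConvexSum {E : Type*} [AddCommGroup E] [Module ℝ E] {q : ℕ}
    (C : Set E) (F : Fin q → Set E) : Prop :=
  (∀ x ∈ C, ∃ (lam : Fin q → ℝ) (pt : Fin q → E),
      (∀ i, 0 ≤ lam i) ∧ (∑ i, lam i) = 1 ∧ (∀ i, lam i ≠ 0 → pt i ∈ F i) ∧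
      x = ∑ i, lam i • pt i) ∧
  (∀ (lam lam' : Fin q → ℝ) (pt pt' : Fin q → E),
      (∀ i, 0 ≤ lam i) → (∑ i, lam i) = 1 → (∀ i, lam i ≠ 0 → pt i ∈ F i) →
      (∀ i, 0 ≤ lam' i) → (∑ i, lam' i) = 1 → (∀ i, lam' i ≠ 0 → pt' i ∈ F i) →
      (∑ i, lam i • pt i) = (∑ i, lam' i • pt' i) →
      ∀ i, lam i = lam' i ∧ (lam i ≠ 0 → pt i = pt' i))

/-!
A state `ρ` in the face of `Lᵢ` satisfies `Pᵢ ρ = ρ`. Because the `Lᵢ` are independent there is a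
(non-orthogonal) projection `Eᵢ` fixing `Lᵢ` and killing every `Lⱼ`, `j ≠ i`; multiplying a convex
combination `∑ λⱼ ρⱼ` of face points by `Eᵢ` on the left isolates `λᵢ ρᵢ`, whose trace is `λᵢ`.
Existence of a decomposition holds for the convex hull of any finite union of convex sets: group
the points of a convex combination by the set they are taken from.
-/

namespace Matrix

theorem PosSemidef.mul_eq_self_of_trace_mul_eq_trace {𝕜 n : Type*} [RCLike 𝕜]
    [Fintype n] [DecidableEq n] {ρ P : Matrix n n 𝕜} (hρ : ρ.PosSemidef) (hP : P.IsHermitian)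
    (hPP : P * P = P) (h : (ρ * P).trace = ρ.trace) : P * ρ = ρ := by
  open scoped MatrixOrder in
  obtain ⟨B, rfl⟩ := CStarAlgebra.nonneg_iff_eq_star_mul_self.mp hρ.nonneg
  rw [star_eq_conjTranspose] at h ⊢
  set Q := 1 - P
  have hQ : Qᴴ = Q := by simp [Q, hP.eq]
  have hQQ : Q * Q = Q := by simp [Q, sub_mul, mul_sub, hPP]
  -- `tr ((B Q)ᴴ (B Q)) = tr (ρ Q) = tr ρ - tr (ρ P) = 0`
  have hBQ : B * Q = 0 := by
    rw [← trace_conjTranspose_mul_self_eq_zero_iff, conjTranspose_mul, hQ, Matrix.mul_assoc,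
      trace_mul_comm, Matrix.mul_assoc, Matrix.mul_assoc, hQQ, ← Matrix.mul_assoc]
    simp [Q, mul_sub, h]
  have hBP : B * P = B := by simpa [Q, mul_sub, sub_eq_zero, eq_comm] using hBQ
  rw [← Matrix.mul_assoc, ← hP.eq, ← conjTranspose_mul, hBP]

theorem exists_mul_eq_self_and_mul_eq_zero_of_disjoint {𝕜 n m : Type*} [RCLike 𝕜]
    [Fintype n] [DecidableEq n] [Fintype m] [DecidableEq m]
    {U V : Submodule 𝕜 (EuclideanSpace 𝕜 n)} (h : Disjoint U V) :
    ∃ E : Matrix n n 𝕜,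
      (∀ A : Matrix n m 𝕜, LinearMap.range A.toEuclideanLin ≤ U → E * A = A) ∧
      (∀ A : Matrix n m 𝕜, LinearMap.range A.toEuclideanLin ≤ V → E * A = 0) := by
  obtain ⟨V', hVV', hc⟩ := h.symm.exists_isCompl
  set π := U.projection V' hc.symm
  have hmul (A : Matrix n m 𝕜) :
      (toEuclideanLin.symm π * A).toEuclideanLin = π ∘ₗ A.toEuclideanLin := by
    rw [toLpLin_mul (q := 2), LinearEquiv.apply_symm_apply]
  refine ⟨toEuclideanLin.symm π, fun A hA => ?_, fun A hA => ?_⟩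
  · refine toEuclideanLin.injective ((hmul A).trans (LinearMap.ext fun v => ?_))
    exact Submodule.projection_apply_of_mem_left _ (hA (LinearMap.mem_range_self _ v))
  · refine toEuclideanLin.injective ((hmul A).trans (LinearMap.ext fun v => ?_))
    rw [map_zero]
    exact Submodule.projection_apply_of_mem_right _ (hVV' (hA (LinearMap.mem_range_self _ v)))

end Matrix

theorem exists_sum_smul_of_mem_convexHull_iUnion {R ι E : Type*} [Field R] [LinearOrder R]
    [IsStrictOrderedRing R] [AddCommGroup E] [Module R E] [Fintype ι] {F : ι → Set E}
    (hF : ∀ i, Convex R (F i)) {x : E} (hx : x ∈ convexHull R (⋃ i, F i)) :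
    ∃ (lam : ι → R) (pt : ι → E), (∀ i, 0 ≤ lam i) ∧ ∑ i, lam i = 1 ∧
      (∀ i, lam i ≠ 0 → pt i ∈ F i) ∧ x = ∑ i, lam i • pt i := by
  classical
  obtain ⟨κ, _, w, z, hw₀, hw₁, hz, rfl⟩ := mem_convexHull_iff_exists_fintype.mp hx
  choose f hf using fun k => Set.mem_iUnion.mp (hz k)
  refine ⟨fun i => ∑ k with f k = i, w k, fun i => Finset.centerMass {k | f k = i} w z,
    fun i => Finset.sum_nonneg fun k _ => hw₀ k, (Finset.sum_fiberwise _ _ _).trans hw₁,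
    fun i hi => ?_, ?_⟩
  · refine (hF i).centerMass_mem (fun k _ => hw₀ k)
      ((Finset.sum_nonneg fun k _ => hw₀ k).lt_of_ne' hi) fun k hk => ?_
    rw [← (Finset.mem_filter.mp hk).2]
    exact hf k
  · rw [← Finset.sum_fiberwise Finset.univ f (fun k => w k • z k)]
    refine Finset.sum_congr rfl fun i _ => ?_
    dsimp only
    by_cases hi : ∑ k with f k = i, w k = 0
    · have hw : ∀ k ∈ ({k | f k = i} : Finset κ), w k = 0 :=
        (Finset.sum_eq_zero_iff_of_nonneg fun k _ => hw₀ k).mp hi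
      rw [hi, zero_smul]
      exact Finset.sum_eq_zero fun k hk => by rw [hw k hk, zero_smul]
    · rw [Finset.centerMass, smul_inv_smul₀ hi]

theorem isDirectConvexSum_convexHull_iUnion {E V : Type*} [AddCommGroup E] [Module ℝ E]
    [AddCommGroup V] [Module ℝ V] {q : ℕ} {F : Fin q → Set E} (hF : ∀ i, Convex ℝ (F i))
    (φ : E →ₗ[ℝ] V) {v : V} (hv : v ≠ 0) (hφ : ∀ i, ∀ x ∈ F i, φ x = v)
    (T : Fin q → E →ₗ[ℝ] E) (hT_self : ∀ i, ∀ x ∈ F i, T i x = x)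
    (hT_ne : ∀ i j, j ≠ i → ∀ x ∈ F j, T i x = 0) :
    IsDirectConvexSum (convexHull ℝ (⋃ i, F i)) F := by
  refine ⟨fun x hx => exists_sum_smul_of_mem_convexHull_iUnion hF hx, ?_⟩
  intro lam lam' pt pt' _ _ hpt _ _ hpt' heq i
  have hT_sum (μ : Fin q → ℝ) (y : Fin q → E) (hy : ∀ j, μ j ≠ 0 → y j ∈ F j) :
      T i (∑ j, μ j • y j) = μ i • y i := by
    rw [map_sum, Finset.sum_eq_single i]
    · by_cases h : μ i = 0
      · simp [h]
      · rw [map_smul, hT_self i _ (hy i h)]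
    · intro j _ hji
      by_cases h : μ j = 0
      · simp [h]
      · rw [map_smul, hT_ne i j hji _ (hy j h), smul_zero]
    · simp
  have hφ_smul (μ : ℝ) (y : E) (hy : μ ≠ 0 → y ∈ F i) : φ (μ • y) = μ • v := by
    by_cases h : μ = 0
    · simp [h]
    · rw [map_smul, hφ i y (hy h)]
  have hi : lam i • pt i = lam' i • pt' i := by
    rw [← hT_sum lam pt hpt, heq, hT_sum lam' pt' hpt']
  have hlam : lam i = lam' i := by
    refine smul_left_injective ℝ hv ?_
    simpa only [hφ_smul _ _ (hpt i), hφ_smul _ _ (hpt' i)] using congrArg φ hi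
  exact ⟨hlam, fun h => smul_right_injective E h (hi.trans (by rw [hlam]))⟩

theorem convex_stateSet (ι : Type*) [Fintype ι] [DecidableEq ι] : Convex ℝ (stateSet ι) := by
  rintro ρ ⟨hρ, hρ_tr⟩ σ ⟨hσ, hσ_tr⟩ a b ha hb hab
  refine ⟨(hρ.smul ha).add (hσ.smul hb), ?_⟩
  rw [Matrix.trace_add, Matrix.trace_smul, Matrix.trace_smul, hρ_tr, hσ_tr]
  exact Convex.combo_self hab 1

theorem convex_setOf_trace_mul_eq {ι : Type*} [Fintype ι] (P : Matrix ι ι ℂ) (c : ℂ) :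
    Convex ℝ {ρ : Matrix ι ι ℂ | (ρ * P).trace = c} :=
  (convex_singleton c).linear_preimage (Matrix.traceLinearMap ι ℝ ℂ ∘ₗ LinearMap.mulRight ℝ P)

theorem convexHull_faces_isDirectConvexSum_general {n p : ℕ}
    (Lsub : Fin p → Submodule ℂ (EuclideanSpace ℂ (Fin n)))
    (hindep : iSupIndep Lsub)
    (P : Fin p → Matrix (Fin n) (Fin n) ℂ)
    (hP : ∀ i, (P i).IsHermitian ∧ P i * P i = P i ∧
      LinearMap.range (Matrix.toEuclideanLin (P i)) = Lsub i)
    (F : Fin p → Set (Matrix (Fin n) (Fin n) ℂ))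
    (hF : ∀ i, F i = {ρ ∈ stateSet (Fin n) | (ρ * P i).trace = 1}) :
    IsDirectConvexSum (convexHull ℝ (⋃ i, F i)) F := by
  have hP_mul : ∀ i, ∀ ρ ∈ F i, P i * ρ = ρ := by
    intro i ρ hρ
    rw [hF i] at hρ
    obtain ⟨⟨hρ_psd, hρ_tr⟩, hρP⟩ := hρ
    exact hρ_psd.mul_eq_self_of_trace_mul_eq_trace (hP i).1 (hP i).2.1 (hρP.trans hρ_tr.symm)
  choose E hE_self hE_ne using fun i =>
    Matrix.exists_mul_eq_self_and_mul_eq_zero_of_disjoint (m := Fin n) (hindep i)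
  refine isDirectConvexSum_convexHull_iUnion
    (fun i => hF i ▸ (convex_stateSet _).inter (convex_setOf_trace_mul_eq (P i) 1))
    (Matrix.traceLinearMap (Fin n) ℝ ℂ) one_ne_zero (fun i ρ hρ => ?_)
    (fun i => LinearMap.mulLeft ℝ (E i)) (fun i ρ hρ => ?_) (fun i j hji ρ hρ => ?_)
  · rw [hF i] at hρ
    exact hρ.1.2
  · change E i * ρ = ρ
    rw [← hP_mul i ρ hρ, ← Matrix.mul_assoc, hE_self i (P i) (hP i).2.2.le]
  · change E i * ρ = 0
    have hPj : LinearMap.range (P j).toEuclideanLin ≤ ⨆ k, ⨆ _ : k ≠ i, Lsub k :=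
      (hP j).2.2.trans_le (le_iSup₂ (f := fun k _ => Lsub k) j hji)
    rw [← hP_mul j ρ hρ, ← Matrix.mul_assoc, hE_ne i (P j) hPj, Matrix.zero_mul]

/-- If `L = L₁ ⊕ ⋯ ⊕ L_p` (internal direct sum of subspaces of `ℂⁿ`) and `Fᵢ` is the face
of the state space corresponding to `Lᵢ`, then the convex hull of the `Fᵢ` is their
direct convex sum. -/
theorem convexHull_faces_isDirectConvexSum {n p : ℕ}
    (L : Submodule ℂ (EuclideanSpace ℂ (Fin n)))
    (Lsub : Fin p → Submodule ℂ (EuclideanSpace ℂ (Fin n)))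
    (hindep : iSupIndep Lsub) (hsup : L = ⨆ i, Lsub i)
    (P : Fin p → Matrix (Fin n) (Fin n) ℂ)
    (hP : ∀ i, (P i).IsHermitian ∧ P i * P i = P i ∧
      LinearMap.range (Matrix.toEuclideanLin (P i)) = Lsub i)
    (F : Fin p → Set (Matrix (Fin n) (Fin n) ℂ))
    (hF : ∀ i, F i = {ρ ∈ stateSet (Fin n) | (ρ * P i).trace = 1}) :
    IsDirectConvexSum (convexHull ℝ (⋃ i, F i)) F :=
  convexHull_faces_isDirectConvexSum_general Lsub hindep P hP F hF

end
end

section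
/- If x_1,…,x_p are linearly independent unit vectors in ℂⁿ, then the corresponding vector states ω_{x_1},…,ω_{x_p} are linearly independent (as elements of the real vector space of hermitian n×n matrices), and the convex hull of {ω_{x_1},…,ω_{x_p}} is a simplex. -/
open scoped Kronecker ComplexOrder

noncomputable section

/-- The vector state (rank-one projection onto `ℂx`) associated to a unit vector `x`. -/
def vecState {ι : Type*} [Fintype ι] (x : EuclideanSpace ℂ ι) : Matrix ι ι ℂ :=
  Matrix.of fun i j => x i * (starRingEnd ℂ) (x j)

def IsSimplex {E : Type*} [AddCommGroup E] [Module ℝ E] (C : Set E) : Prop :=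
  ∀ x ∈ C, ∃! w : E →₀ ℝ,
    ↑w.support ⊆ Set.extremePoints ℝ C ∧ (∀ y, 0 ≤ w y) ∧
    (w.sum fun _ a => a) = 1 ∧ (w.sum fun y a => a • y) = x

/-! Applying `∑ k, c k • ω_{x k}` to `x j` gives `∑ k, (c k * ⟪x k, x j⟫) • x k`, so linear
independence of the `x k` forces `c j * ‖x j‖² = 0`: the vector states are linearly, hence
affinely, independent. The convex hull of a finite affinely independent family is a simplex:
barycentric coordinates are unique, and a vertex `v j` is extreme because writing it as
`a • y + b • z` with `a, b > 0` forces the coordinates of `y` to vanish away from `j`. -/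

open Set

theorem Finsupp.sum_mapDomain_eq_sum_univ {α β M N : Type*} [Fintype α] [AddCommMonoid M]
    [AddCommMonoid N] {f : α → β} (hf : Function.Injective f) (g : α →₀ M) {h : β → M → N}
    (h0 : ∀ b, h b 0 = 0) : (g.mapDomain f).sum h = ∑ a, h (f a) (g a) := by
  rw [Finsupp.sum_mapDomain_index_inj hf, Finsupp.sum_fintype _ _ fun _ => h0 _]

section ConvexHullRange

variable {𝕜 E ι : Type*} [AddCommGroup E] [Fintype ι] {v : ι → E}

theorem mem_convexHull_range_iff_exists_sum_smul [Field 𝕜] [LinearOrder 𝕜]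
    [IsStrictOrderedRing 𝕜] [Module 𝕜 E] {z : E} :
    z ∈ convexHull 𝕜 (range v) ↔
      ∃ c : ι → 𝕜, (∀ i, 0 ≤ c i) ∧ ∑ i, c i = 1 ∧ ∑ i, c i • v i = z := by
  refine ⟨fun hz => ?_, fun ⟨c, hc0, hc1, hcz⟩ =>
    mem_convexHull_of_exists_fintype c v hc0 hc1 (mem_range_self ·) hcz⟩
  obtain ⟨s, c, hc0, hc1, rfl⟩ := (convexHull_range_eq_exists_affineCombination v).subset hz
  have hc1' : ∑ i, (s : Set ι).indicator c i = 1 := by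
    rwa [Finset.sum_indicator_subset _ s.subset_univ]
  refine ⟨(s : Set ι).indicator c, fun i => ?_, hc1', ?_⟩
  · by_cases hi : i ∈ s <;> simp [hi, hc0]
  · rw [s.affineCombination_indicator_subset c v s.subset_univ,
      Finset.affineCombination_eq_linear_combination _ _ _ hc1']

theorem AffineIndependent.eq_of_sum_smul_eq [Ring 𝕜] [Module 𝕜 E] (hv : AffineIndependent 𝕜 v)
    {c d : ι → 𝕜} (hc : ∑ i, c i = 1) (hd : ∑ i, d i = 1)
    (h : ∑ i, c i • v i = ∑ i, d i • v i) : c = d := by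
  refine (affineIndependent_iff_eq_of_fintype_affineCombination_eq 𝕜 v).mp hv c d hc hd ?_
  rwa [Finset.affineCombination_eq_linear_combination _ _ _ hc,
    Finset.affineCombination_eq_linear_combination _ _ _ hd]

theorem AffineIndependent.extremePoints_convexHull_range [Field 𝕜] [LinearOrder 𝕜]
    [IsStrictOrderedRing 𝕜] [Module 𝕜 E] (hv : AffineIndependent 𝕜 v) :
    (convexHull 𝕜 (range v)).extremePoints 𝕜 = range v := by
  classical
  refine extremePoints_convexHull_subset.antisymm ?_
  rintro _ ⟨j, rfl⟩
  refine mem_extremePoints_iff_left.mpr ⟨subset_convexHull 𝕜 _ ⟨j, rfl⟩, ?_⟩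
  rintro y hy z hz ⟨a, b, ha, hb, hab, hvj⟩
  obtain ⟨c, hc0, hc1, rfl⟩ := mem_convexHull_range_iff_exists_sum_smul.mp hy
  obtain ⟨d, hd0, hd1, rfl⟩ := mem_convexHull_range_iff_exists_sum_smul.mp hz
  -- the coordinates of `v j` are `Pi.single j 1`
  have hcd : a • c + b • d = Pi.single j 1 := by
    refine hv.eq_of_sum_smul_eq ?_ (by simp) ?_
    · simp [Finset.sum_add_distrib, ← Finset.mul_sum, hc1, hd1, hab]
    · simp [add_smul, mul_smul, Finset.sum_add_distrib, ← Finset.smul_sum, hvj]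
  have hc_off : ∀ i ≠ j, c i = 0 := fun i hij => by
    have := congr_fun hcd i
    simp only [Pi.add_apply, Pi.smul_apply, smul_eq_mul, Pi.single_eq_of_ne hij] at this
    nlinarith [mul_nonneg ha.le (hc0 i), mul_nonneg hb.le (hd0 i), hc0 i]
  rw [Fintype.sum_eq_single j hc_off] at hc1
  rw [Fintype.sum_eq_single j fun i hij => by simp [hc_off i hij], hc1, one_smul]

theorem AffineIndependent.isSimplex_convexHull_range [Module ℝ E] (hv : AffineIndependent ℝ v) :
    IsSimplex (convexHull ℝ (range v)) := by
  classical
  intro z hz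
  obtain ⟨c, hc0, hc1, rfl⟩ := mem_convexHull_range_iff_exists_sum_smul.mp hz
  rw [hv.extremePoints_convexHull_range]
  refine ⟨(Finsupp.equivFunOnFinite.symm c).mapDomain v,
    ⟨fun y hy => ?_, fun y => ?_, ?_, ?_⟩, ?_⟩
  · obtain ⟨i, -, rfl⟩ := Finset.mem_image.mp (Finsupp.mapDomain_support hy)
    exact mem_range_self i
  · by_cases hy : y ∈ range v
    · obtain ⟨i, rfl⟩ := hy
      simpa [Finsupp.mapDomain_apply hv.injective] using hc0 i
    · simp [Finsupp.mapDomain_of_notMem_range _ _ hy]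
  · simpa [Finsupp.sum_mapDomain_eq_sum_univ hv.injective] using hc1
  · simp [Finsupp.sum_mapDomain_eq_sum_univ hv.injective]
  · rintro w ⟨hw, -, hw1, hwz⟩
    rw [← Finsupp.mapDomain_comapDomain v hv.injective w hw] at hw1 hwz ⊢
    rw [Finsupp.sum_mapDomain_eq_sum_univ hv.injective _ fun _ => rfl] at hw1
    rw [Finsupp.sum_mapDomain_eq_sum_univ hv.injective _ (h := fun y a => a • y)
      fun _ => zero_smul ℝ _] at hwz
    have hwc := hv.eq_of_sum_smul_eq hw1 hc1 hwz
    congr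
    ext i
    simp [← hwc]

end ConvexHullRange

theorem vecState_mulVec {ι : Type*} [Fintype ι] (x y : EuclideanSpace ℂ ι) :
    (vecState x).mulVec y.ofLp = inner ℂ x y • x.ofLp := by
  ext i
  simp [vecState, Matrix.mulVec, dotProduct, EuclideanSpace.inner_eq_star_dotProduct,
    Finset.mul_sum, mul_comm, mul_left_comm]

theorem LinearIndependent.vecState {ι κ : Type*} [Fintype ι] {x : κ → EuclideanSpace ℂ ι}
    (hx : LinearIndependent ℂ x) : LinearIndependent ℂ fun k => vecState (x k) := by
  refine linearIndependent_iff'.mpr fun s c hc j hj => ?_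
  have hcomb : ∑ k ∈ s, (c k * inner ℂ (x k) (x j)) • x k = 0 := by
    apply WithLp.ofLp_injective
    have := congr_arg (fun A => A.mulVec (x j).ofLp) hc
    simpa [Matrix.sum_mulVec, Matrix.smul_mulVec, vecState_mulVec, mul_smul] using this
  have hcj := linearIndependent_iff'.mp hx s _ hcomb j hj
  exact (mul_eq_zero.mp hcj).resolve_right (inner_self_ne_zero.mpr (hx.ne_zero j))

theorem vecStates_linearIndependent_and_simplex_general {n p : ℕ}
    (x : Fin p → EuclideanSpace ℂ (Fin n))
    (hli : LinearIndependent ℂ x) :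
    LinearIndependent ℝ (fun i => vecState (x i)) ∧
    IsSimplex (convexHull ℝ (Set.range fun i => vecState (x i))) := by
  have hω : LinearIndependent ℝ fun i => vecState (x i) := hli.vecState.restrict_scalars' ℝ
  exact ⟨hω, hω.affineIndependent.isSimplex_convexHull_range⟩

/-- If `x₁, …, x_p` are linearly independent unit vectors in `ℂⁿ`, then the vector states
`ω_{x₁}, …, ω_{x_p}` are linearly independent over `ℝ`, and their convex hull is a
simplex. -/
theorem vecStates_linearIndependent_and_simplex {n p : ℕ}
    (x : Fin p → EuclideanSpace ℂ (Fin n))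
    (hx : ∀ i, ‖x i‖ = 1) (hli : LinearIndependent ℂ x) :
    LinearIndependent ℝ (fun i => vecState (x i)) ∧
    IsSimplex (convexHull ℝ (Set.range fun i => vecState (x i))) :=
  vecStates_linearIndependent_and_simplex_general x hli

end
end

section
/- Let e_1,…,e_p ∈ ℂᵐ and f_1,…,f_p ∈ ℂⁿ be unit vectors with the lines ℂe_1,…,ℂe_p pairwise distinct and f_1,…,f_p linearly independent, and let λ_1,…,λ_p be nonnegative numbers with Σ λ_i = 1. Then the separable state ω = Σ_i λ_i ω_{e_i⊗f_i} has a unique representation as a convex combination of pure product states: if ω = Σ_{j=1}^r μ_j ω_{x_j⊗y_j} with all μ_j > 0, Σ μ_j = 1, and the pure product states ω_{x_j⊗y_j} pairwise distinct, then {(μ_j, ω_{x_j⊗y_j})} coincides, up to reordering, with {(λ_i, ω_{e_i⊗f_i}) : λ_i > 0}. -/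
open scoped Kronecker ComplexOrder

noncomputable section

/-- The set of separable states on `B(ℂᵐ ⊗ ℂⁿ)`: convex combinations of pure product states. -/
def sepSet (m n : ℕ) : Set (Matrix (Fin m × Fin n) (Fin m × Fin n) ℂ) :=
  {ρ | ∃ (r : ℕ) (lam : Fin r → ℝ) (x : Fin r → EuclideanSpace ℂ (Fin m))
        (y : Fin r → EuclideanSpace ℂ (Fin n)),
      (∀ i, 0 ≤ lam i) ∧ (∑ i, lam i) = 1 ∧ (∀ i, ‖x i‖ = 1) ∧ (∀ i, ‖y i‖ = 1) ∧
      ρ = ∑ i, lam i • vecState (tensorVec (x i) (y i))}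

/-- `F` is a face of the convex set `C`. -/
def IsFace {E : Type*} [AddCommGroup E] [Module ℝ E] (C F : Set E) : Prop :=
  F ⊆ C ∧ Convex ℝ F ∧
    ∀ ⦃x⦄, x ∈ C → ∀ ⦃y⦄, y ∈ C → ∀ ⦃z⦄, z ∈ openSegment ℝ x y → z ∈ F → x ∈ F ∧ y ∈ F

/-- The smallest face of `C` containing `X`. -/
def faceGen {E : Type*} [AddCommGroup E] [Module ℝ E] (C X : Set E) : Set E :=
  ⋂₀ {F | IsFace C F ∧ X ⊆ F}

/-- Two convex sets (possibly in different ambient spaces) are affinely isomorphic. -/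
def AffIsomorphic {E F' : Type*} [AddCommGroup E] [Module ℝ E] [AddCommGroup F'] [Module ℝ F']
    (A : Set E) (B : Set F') : Prop :=
  ∃ φ : E → F', Set.BijOn φ A B ∧
    ∀ x ∈ A, ∀ y ∈ A, ∀ t : ℝ, 0 ≤ t → t ≤ 1 →
      φ (t • x + (1 - t) • y) = t • φ x + (1 - t) • φ y

/-!
Every vector `w` of a decomposition `ω = ∑ μⱼ ω_w` with `μⱼ > 0` lies in the span of the
`eᵢ ⊗ fᵢ`: if `u` is orthogonal to all of them then `ωu = 0`, so
`0 = ⟪u, ωu⟫ = ∑ μⱼ |⟪wⱼ, u⟫|²`. A product vector `x ⊗ y = ∑ cᵢ eᵢ ⊗ fᵢ` is a multiple of a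
single `eᵢ ⊗ fᵢ`: slicing along the first factor and using the independence of the `fᵢ` puts
every `eᵢ` with `cᵢ ≠ 0` on the line `ℂx`, and these lines are pairwise distinct. Hence each
`ω_{xⱼ⊗yⱼ}` is some `ω_{e_σⱼ⊗f_σⱼ}`, and since rank-one projections onto linearly independent
vectors are linearly independent, comparing coefficients gives the weights.
-/

open scoped InnerProductSpace Matrix

lemma EuclideanSpace.exists_apply_ne_zero {ι : Type*} {x : EuclideanSpace ℂ ι} (hx : x ≠ 0) :
    ∃ a, x a ≠ 0 := by
  by_contra! h
  exact hx (by ext a; exact h a)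

lemma LinearIndependent.sum_fiber_eq_of_sum_smul_comp_eq {R M ι κ : Type*} [Ring R]
    [AddCommGroup M] [Module R M] [Fintype ι] [Fintype κ] [DecidableEq ι] {b : ι → M}
    (hb : LinearIndependent R b) (σ : κ → ι) {μ : κ → R} {c : ι → R}
    (h : ∑ j, μ j • b (σ j) = ∑ i, c i • b i) (i : ι) :
    ∑ j with σ j = i, μ j = c i := by
  refine Fintype.linearIndependent_iffₛ.1 hb (fun i => ∑ j with σ j = i, μ j) c ?_ i
  rw [← h, ← Finset.sum_fiberwise Finset.univ σ]
  refine Finset.sum_congr rfl fun i _ => ?_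
  rw [Finset.sum_smul]
  exact Finset.sum_congr rfl fun j hj => by rw [(Finset.mem_filter.1 hj).2]

lemma LinearIndependent.eq_comp_of_sum_smul_comp_eq {R M ι κ : Type*} [Ring R]
    [AddCommGroup M] [Module R M] [Fintype ι] [Fintype κ] {b : ι → M}
    (hb : LinearIndependent R b) {σ : κ → ι} (hσ : Function.Injective σ) {μ : κ → R}
    {c : ι → R} (h : ∑ j, μ j • b (σ j) = ∑ i, c i • b i) :
    (∀ j, μ j = c (σ j)) ∧ ∀ i, c i ≠ 0 → ∃ j, σ j = i := by
  classical
  refine ⟨fun j => ?_, fun i hi => ?_⟩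
  · rw [← hb.sum_fiber_eq_of_sum_smul_comp_eq σ h, Finset.sum_eq_single j]
    · exact fun k hk hkj => absurd (hσ (Finset.mem_filter.1 hk).2) hkj
    · simp
  · by_contra! hi'
    apply hi
    rw [← hb.sum_fiber_eq_of_sum_smul_comp_eq σ h]
    simp [hi']

section VecState

variable {ι : Type*} [Fintype ι]

lemma vecState_mulVec_s7 (a u : EuclideanSpace ℂ ι) :
    vecState a *ᵥ u.ofLp = (⟪a, u⟫_ℂ • a).ofLp := by
  ext i
  simp only [vecState, Matrix.mulVec, dotProduct, Matrix.of_apply,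
    EuclideanSpace.inner_eq_star_dotProduct, WithLp.ofLp_smul, Pi.smul_apply, smul_eq_mul,
    Finset.sum_mul, Pi.star_apply, Complex.star_def]
  exact Finset.sum_congr rfl fun j _ => by ring

lemma sum_smul_vecState_mulVec {κ : Type*} (s : Finset κ) (c : κ → ℝ)
    (v : κ → EuclideanSpace ℂ ι) (u : EuclideanSpace ℂ ι) :
    (∑ k ∈ s, c k • vecState (v k)) *ᵥ u.ofLp =
      (∑ k ∈ s, (c k * ⟪v k, u⟫_ℂ) • v k).ofLp := by
  simp [Matrix.sum_mulVec, Matrix.smul_mulVec, vecState_mulVec_s7, mul_smul]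

lemma vecState_smul (c : ℂ) (v : EuclideanSpace ℂ ι) :
    vecState (c • v) = (‖c‖ : ℂ) ^ 2 • vecState v := by
  ext a b
  simp only [vecState, Matrix.of_apply, Matrix.smul_apply, PiLp.smul_apply, smul_eq_mul,
    map_mul]
  rw [← Complex.mul_conj']
  ring

lemma inner_sum_smul_vecState_mulVec {κ : Type*} (s : Finset κ) (c : κ → ℝ)
    (v : κ → EuclideanSpace ℂ ι) (u : EuclideanSpace ℂ ι) :
    ⟪u, WithLp.toLp 2 ((∑ k ∈ s, c k • vecState (v k)) *ᵥ u.ofLp)⟫_ℂ =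
      ((∑ k ∈ s, c k * ‖⟪v k, u⟫_ℂ‖ ^ 2 : ℝ) : ℂ) := by
  rw [sum_smul_vecState_mulVec, WithLp.toLp_ofLp, inner_sum]
  push_cast
  refine Finset.sum_congr rfl fun k _ => ?_
  rw [inner_smul_right, ← Complex.mul_conj', inner_conj_symm]
  ring

lemma mem_span_of_sum_smul_vecState_eq {κ κ' : Type*} [Fintype κ] [Fintype κ']
    {μ : κ' → ℝ} (hμ : ∀ j, 0 < μ j) {w : κ' → EuclideanSpace ℂ ι}
    {c : κ → ℝ} {v : κ → EuclideanSpace ℂ ι}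
    (h : ∑ j, μ j • vecState (w j) = ∑ i, c i • vecState (v i)) (j : κ') :
    w j ∈ Submodule.span ℂ (Set.range v) := by
  rw [← Submodule.orthogonal_orthogonal (Submodule.span ℂ (Set.range v)),
    Submodule.mem_orthogonal]
  intro u hu
  have hvu : ∀ i, ⟪v i, u⟫_ℂ = 0 := fun i =>
    Submodule.inner_right_of_mem_orthogonal (Submodule.subset_span (Set.mem_range_self i)) hu
  have hsum : ∑ k, μ k * ‖⟪w k, u⟫_ℂ‖ ^ 2 = 0 := by
    have := inner_sum_smul_vecState_mulVec Finset.univ μ w u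
    rw [h, sum_smul_vecState_mulVec] at this
    simp only [hvu, mul_zero, zero_smul, Finset.sum_const_zero, WithLp.ofLp_zero,
      WithLp.toLp_zero, inner_zero_right] at this
    exact_mod_cast this.symm
  have hterm := (Finset.sum_eq_zero_iff_of_nonneg fun k _ =>
    mul_nonneg (hμ k).le (sq_nonneg _)).1 hsum j (Finset.mem_univ j)
  rw [inner_eq_zero_symm]
  simpa [(hμ j).ne'] using hterm

lemma linearIndependent_vecState {κ : Type*} [Fintype κ] {v : κ → EuclideanSpace ℂ ι}
    (hv : LinearIndependent ℂ v) : LinearIndependent ℝ fun i => vecState (v i) := by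
  refine Fintype.linearIndependent_iff.2 fun g hg i => ?_
  have hgv : ∑ k, (g k * ⟪v k, v i⟫_ℂ) • v k = 0 := by
    have := congrArg (fun M => WithLp.toLp 2 (M *ᵥ (v i).ofLp)) hg
    simpa only [sum_smul_vecState_mulVec, WithLp.toLp_ofLp, Matrix.zero_mulVec,
      WithLp.toLp_zero] using this
  have := Fintype.linearIndependent_iff.1 hv _ hgv i
  simpa [hv.ne_zero i] using this

end VecState

section TensorVec

variable {m n : ℕ}

def tensorSlice (a : Fin m) :
    EuclideanSpace ℂ (Fin m × Fin n) →ₗ[ℂ] EuclideanSpace ℂ (Fin n) where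
  toFun z := WithLp.toLp 2 fun b => z (a, b)
  map_add' _ _ := rfl
  map_smul' _ _ := rfl

lemma tensorSlice_tensorVec (a : Fin m) (x : EuclideanSpace ℂ (Fin m))
    (y : EuclideanSpace ℂ (Fin n)) : tensorSlice a (tensorVec x y) = x a • y :=
  rfl

lemma tensorSlice_sum_smul_tensorVec {κ : Type*} [Fintype κ] (a : Fin m) (c : κ → ℂ)
    (e : κ → EuclideanSpace ℂ (Fin m)) (f : κ → EuclideanSpace ℂ (Fin n)) :
    tensorSlice a (∑ k, c k • tensorVec (e k) (f k)) = ∑ k, (c k * e k a) • f k := by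
  simp only [map_sum, map_smul, tensorSlice_tensorVec, smul_smul]

lemma norm_tensorVec (x : EuclideanSpace ℂ (Fin m)) (y : EuclideanSpace ℂ (Fin n)) :
    ‖tensorVec x y‖ = ‖x‖ * ‖y‖ := by
  simp only [EuclideanSpace.norm_eq, tensorVec, Fintype.sum_prod_type, norm_mul, mul_pow,
    ← Finset.mul_sum, ← Finset.sum_mul]
  rw [Real.sqrt_mul (Finset.sum_nonneg fun _ _ => sq_nonneg _)]

lemma linearIndependent_tensorVec {κ : Type*} [Fintype κ] {e : κ → EuclideanSpace ℂ (Fin m)}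
    {f : κ → EuclideanSpace ℂ (Fin n)} (he : ∀ i, e i ≠ 0) (hf : LinearIndependent ℂ f) :
    LinearIndependent ℂ fun i => tensorVec (e i) (f i) := by
  refine Fintype.linearIndependent_iff.2 fun c hc i => ?_
  obtain ⟨a, ha⟩ := EuclideanSpace.exists_apply_ne_zero (he i)
  have hslice := tensorSlice_sum_smul_tensorVec a c e f
  rw [hc, map_zero] at hslice
  exact (mul_eq_zero.1 (Fintype.linearIndependent_iff.1 hf _ hslice.symm i)).resolve_right ha

end TensorVec

section TensorVecSpan

variable {m n : ℕ} {κ : Type*} [Fintype κ] {e : κ → EuclideanSpace ℂ (Fin m)}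
  {f : κ → EuclideanSpace ℂ (Fin n)} {c : κ → ℂ} {x : EuclideanSpace ℂ (Fin m)}
  {y : EuclideanSpace ℂ (Fin n)}

lemma span_singleton_eq_of_sum_smul_tensorVec_eq (hf : LinearIndependent ℂ f) (hx : x ≠ 0)
    (h : ∑ k, c k • tensorVec (e k) (f k) = tensorVec x y) {i : κ} (hei : e i ≠ 0)
    (hci : c i ≠ 0) : Submodule.span ℂ {e i} = Submodule.span ℂ {x} := by
  obtain ⟨a₀, ha₀⟩ := EuclideanSpace.exists_apply_ne_zero hx
  have hslice : ∀ a, ∑ k, (c k * e k a) • f k = x a • y := fun a => by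
    rw [← tensorSlice_sum_smul_tensorVec, h, tensorSlice_tensorVec]
  have hcoord : ∀ a, x a₀ * (c i * e i a) = x a * (c i * e i a₀) := fun a => by
    have hcomb : ∑ k, (x a₀ * (c k * e k a) - x a * (c k * e k a₀)) • f k = 0 :=
      calc _ = x a₀ • ∑ k, (c k * e k a) • f k
            - x a • ∑ k, (c k * e k a₀) • f k := by
            simp only [Finset.smul_sum, smul_smul, ← Finset.sum_sub_distrib, sub_smul]
        _ = 0 := by rw [hslice, hslice, smul_smul, smul_smul, mul_comm, sub_self]
    exact sub_eq_zero.1 (Fintype.linearIndependent_iff.1 hf _ hcomb i)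
  have he_eq : e i = (e i a₀ / x a₀) • x := by
    ext a
    simp only [PiLp.smul_apply, smul_eq_mul]
    field_simp
    exact mul_left_cancel₀ hci (by linear_combination hcoord a)
  have hscalar : e i a₀ / x a₀ ≠ 0 := by
    intro h0
    exact hei (by rw [he_eq, h0, zero_smul])
  rw [he_eq]
  exact Submodule.span_singleton_smul_eq (IsUnit.mk0 _ hscalar) x

lemma exists_eq_smul_tensorVec_of_mem_span (he : ∀ i, e i ≠ 0) (hf : LinearIndependent ℂ f)
    (hdist : ∀ i j, i ≠ j → Submodule.span ℂ {e i} ≠ Submodule.span ℂ {e j})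
    (hxy : tensorVec x y ≠ 0)
    (hmem : tensorVec x y ∈ Submodule.span ℂ (Set.range fun i => tensorVec (e i) (f i))) :
    ∃ i, ∃ c : ℂ, tensorVec x y = c • tensorVec (e i) (f i) := by
  obtain ⟨c, hc⟩ := (Submodule.mem_span_range_iff_exists_fun ℂ).1 hmem
  have hx : x ≠ 0 := by
    rintro rfl
    exact hxy (by ext; simp [tensorVec])
  obtain ⟨i₀, hi₀⟩ : ∃ i, c i ≠ 0 := by
    by_contra! h
    exact hxy (by simp [← hc, h])
  have hzero : ∀ i, i ≠ i₀ → c i = 0 := fun i hi => by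
    by_contra hci
    exact hdist i i₀ hi ((span_singleton_eq_of_sum_smul_tensorVec_eq hf hx hc (he i) hci).trans
      (span_singleton_eq_of_sum_smul_tensorVec_eq hf hx hc (he i₀) hi₀).symm)
  refine ⟨i₀, c i₀, ?_⟩
  rw [← hc, Fintype.sum_eq_single i₀ fun i hi => by rw [hzero i hi, zero_smul]]

lemma exists_vecState_tensorVec_eq_of_mem_span
    (he : ∀ i, ‖e i‖ = 1) (hf1 : ∀ i, ‖f i‖ = 1) (hf : LinearIndependent ℂ f)
    (hdist : ∀ i j, i ≠ j → Submodule.span ℂ {e i} ≠ Submodule.span ℂ {e j})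
    (hx : ‖x‖ = 1) (hy : ‖y‖ = 1)
    (hmem : tensorVec x y ∈ Submodule.span ℂ (Set.range fun i => tensorVec (e i) (f i))) :
    ∃ i, vecState (tensorVec x y) = vecState (tensorVec (e i) (f i)) := by
  have hxy : tensorVec x y ≠ 0 := norm_ne_zero_iff.1 (by simp [norm_tensorVec, hx, hy])
  have he0 : ∀ i, e i ≠ 0 := fun i => norm_ne_zero_iff.1 (by simp [he i])
  obtain ⟨i, c, hc⟩ := exists_eq_smul_tensorVec_of_mem_span he0 hf hdist hxy hmem
  have hc1 : ‖c‖ = 1 := by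
    simpa [norm_smul, norm_tensorVec, hx, hy, he i, hf1 i] using (congrArg norm hc).symm
  exact ⟨i, by rw [hc, vecState_smul, hc1]; simp⟩

end TensorVecSpan

theorem unique_decomposition_general {m n p : ℕ}
    (e : Fin p → EuclideanSpace ℂ (Fin m)) (f : Fin p → EuclideanSpace ℂ (Fin n))
    (he : ∀ i, ‖e i‖ = 1) (hf1 : ∀ i, ‖f i‖ = 1) (hf : LinearIndependent ℂ f)
    (hdist : ∀ i j : Fin p, i ≠ j →
      Submodule.span ℂ {e i} ≠ Submodule.span ℂ {e j})
    (lam : Fin p → ℝ)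
    (r : ℕ) (mu : Fin r → ℝ) (hmu : ∀ j, 0 < mu j)
    (x : Fin r → EuclideanSpace ℂ (Fin m)) (y : Fin r → EuclideanSpace ℂ (Fin n))
    (hx : ∀ j, ‖x j‖ = 1) (hy : ∀ j, ‖y j‖ = 1)
    (hdistinct : ∀ j k : Fin r, j ≠ k →
      vecState (tensorVec (x j) (y j)) ≠ vecState (tensorVec (x k) (y k)))
    (hdecomp : (∑ j, mu j • vecState (tensorVec (x j) (y j))) =
      ∑ i, lam i • vecState (tensorVec (e i) (f i))) :
    ∃ σ : Fin r → Fin p, Function.Injective σ ∧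
      (∀ j, mu j = lam (σ j) ∧
        vecState (tensorVec (x j) (y j)) = vecState (tensorVec (e (σ j)) (f (σ j)))) ∧
      (∀ i, lam i ≠ 0 → ∃ j, σ j = i) := by
  choose σ hσ using fun j => exists_vecState_tensorVec_eq_of_mem_span he hf1 hf hdist
    (hx j) (hy j) (mem_span_of_sum_smul_vecState_eq hmu hdecomp j)
  have hσinj : Function.Injective σ := fun j k hjk => by
    by_contra hne
    exact hdistinct j k hne (by rw [hσ, hσ, hjk])
  have hv : LinearIndependent ℂ fun i => tensorVec (e i) (f i) :=
    linearIndependent_tensorVec (fun i => norm_ne_zero_iff.1 (by simp [he i])) hf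
  obtain ⟨hweights, hsurj⟩ := (linearIndependent_vecState hv).eq_comp_of_sum_smul_comp_eq hσinj
    (by simpa only [hσ] using hdecomp)
  exact ⟨σ, hσinj, fun j => ⟨hweights j, hσ j⟩, hsurj⟩

/-- With the lines `ℂeᵢ` pairwise distinct and the `fᵢ` linearly independent, the
separable state `ω = Σ λᵢ ω_{eᵢ⊗fᵢ}` has a unique representation as a convex combination
of pure product states: any decomposition with positive weights and pairwise distinct
pure product states coincides, up to reordering, with `{(λᵢ, ω_{eᵢ⊗fᵢ}) : λᵢ > 0}`. -/
theorem unique_decomposition {m n p : ℕ}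
    (e : Fin p → EuclideanSpace ℂ (Fin m)) (f : Fin p → EuclideanSpace ℂ (Fin n))
    (he : ∀ i, ‖e i‖ = 1) (hf1 : ∀ i, ‖f i‖ = 1) (hf : LinearIndependent ℂ f)
    (hdist : ∀ i j : Fin p, i ≠ j →
      Submodule.span ℂ {e i} ≠ Submodule.span ℂ {e j})
    (lam : Fin p → ℝ) (hlam : ∀ i, 0 ≤ lam i) (hlam1 : (∑ i, lam i) = 1)
    (r : ℕ) (mu : Fin r → ℝ) (hmu : ∀ j, 0 < mu j) (hmu1 : (∑ j, mu j) = 1)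
    (x : Fin r → EuclideanSpace ℂ (Fin m)) (y : Fin r → EuclideanSpace ℂ (Fin n))
    (hx : ∀ j, ‖x j‖ = 1) (hy : ∀ j, ‖y j‖ = 1)
    (hdistinct : ∀ j k : Fin r, j ≠ k →
      vecState (tensorVec (x j) (y j)) ≠ vecState (tensorVec (x k) (y k)))
    (hdecomp : (∑ j, mu j • vecState (tensorVec (x j) (y j))) =
      ∑ i, lam i • vecState (tensorVec (e i) (f i))) :
    ∃ σ : Fin r → Fin p, Function.Injective σ ∧
      (∀ j, mu j = lam (σ j) ∧
        vecState (tensorVec (x j) (y j)) = vecState (tensorVec (e (σ j)) (f (σ j)))) ∧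
      (∀ i, lam i ≠ 0 → ∃ j, σ j = i) :=
  unique_decomposition_general e f he hf1 hf hdist lam r mu hmu x y hx hy hdistinct hdecomp

end
end
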